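/- For every β₀ ∈ (0,π) there exist a finite set P ⊆ ℝ² and an angle β₁ ∈ (0,π) such that the area (2-dimensional Lebesgue measure) of O_{β₀}H(P) equals 0 while the area of O_{β₁}H(P) is strictly positive. In particular, for any prescribed β₀ there is a point set whose maximum-area angle is not β₀. -/

import Mathlib

open Real Set MeasureTheory Pointwise

/-- The open top-right cone for angle `β`. -/
def CTR (β : ℝ) : Set (ℝ × ℝ) :=
  {p | ∃ s t : ℝ, 0 < s ∧ 0 < t ∧ p = s • ((1 : ℝ), (0 : ℝ)) + t • (Real.cos β, Real.sin β)}

/-- The open top-left cone for angle `β`. -/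
def CTL (β : ℝ) : Set (ℝ × ℝ) :=
  {p | ∃ s t : ℝ, 0 < s ∧ 0 < t ∧ p = s • ((-1 : ℝ), (0 : ℝ)) + t • (Real.cos β, Real.sin β)}

/-- The open bottom-left cone: the reflection of the top-right cone. -/
def CBL (β : ℝ) : Set (ℝ × ℝ) := {p | -p ∈ CTR β}

/-- The open bottom-right cone: the reflection of the top-left cone. -/
def CBR (β : ℝ) : Set (ℝ × ℝ) := {p | -p ∈ CTL β}

/-- The quad `a + C` of a set `C` by a point `a`. -/
def quad (a : ℝ × ℝ) (C : Set (ℝ × ℝ)) : Set (ℝ × ℝ) := {x | x - a ∈ C}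

/-- A region `Q` is `P`-free if it contains no point of `P`. -/
def PFree (P Q : Set (ℝ × ℝ)) : Prop := P ∩ Q = ∅

/-- `C` is one of the four β-cones. -/
def IsBetaCone (β : ℝ) (C : Set (ℝ × ℝ)) : Prop :=
  C = CTR β ∨ C = CTL β ∨ C = CBL β ∨ C = CBR β

/-- The β-hull of `P`: the plane minus the union of all `P`-free β-quadrants. -/
def betaHull (β : ℝ) (P : Set (ℝ × ℝ)) : Set (ℝ × ℝ) :=
  {x | ∀ (a : ℝ × ℝ) (C : Set (ℝ × ℝ)), IsBetaCone β C → PFree P (quad a C) →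
    x ∉ quad a C}

lemma mem_CTR_iff {β : ℝ} (hβ : 0 < Real.sin β) {p : ℝ × ℝ} :
    p ∈ CTR β ↔ 0 < p.2 ∧ p.2 * Real.cos β < p.1 * Real.sin β := by
  constructor
  · rintro ⟨s, t, hs, ht, rfl⟩
    simp only [Prod.smul_mk, smul_eq_mul, Prod.mk_add_mk, mul_one, mul_zero, zero_add]
    exact ⟨by positivity, by nlinarith [mul_pos hs hβ]⟩
  · rintro ⟨h1, h2⟩
    have ht : p.2 / Real.sin β * Real.sin β = p.2 := div_mul_cancel₀ _ hβ.ne'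
    have ht2 : p.2 / Real.sin β * Real.cos β * Real.sin β = p.2 * Real.cos β := by
      rw [mul_right_comm, ht]
    refine ⟨p.1 - p.2 / Real.sin β * Real.cos β, p.2 / Real.sin β, ?_, div_pos h1 hβ, ?_⟩
    · rw [sub_pos, ← mul_lt_mul_iff_of_pos_right hβ, ht2]; exact h2
    · simp only [Prod.smul_mk, smul_eq_mul, Prod.mk_add_mk, mul_one, mul_zero, zero_add]
      rw [Prod.ext_iff]
      exact ⟨by ring, by linarith [ht]⟩

lemma mem_CTL_iff {β : ℝ} (hβ : 0 < Real.sin β) {p : ℝ × ℝ} :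
    p ∈ CTL β ↔ 0 < p.2 ∧ p.1 * Real.sin β < p.2 * Real.cos β := by
  constructor
  · rintro ⟨s, t, hs, ht, rfl⟩
    simp only [Prod.smul_mk, smul_eq_mul, Prod.mk_add_mk, mul_one, mul_zero, zero_add]
    exact ⟨by positivity, by nlinarith [mul_pos hs hβ]⟩
  · rintro ⟨h1, h2⟩
    have ht : p.2 / Real.sin β * Real.sin β = p.2 := div_mul_cancel₀ _ hβ.ne'
    have ht2 : p.2 / Real.sin β * Real.cos β * Real.sin β = p.2 * Real.cos β := by
      rw [mul_right_comm, ht]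
    refine ⟨p.2 / Real.sin β * Real.cos β - p.1, p.2 / Real.sin β, ?_, div_pos h1 hβ, ?_⟩
    · rw [sub_pos, ← mul_lt_mul_iff_of_pos_right hβ, ht2]; exact h2
    · simp only [Prod.smul_mk, smul_eq_mul, Prod.mk_add_mk, mul_one, mul_zero, zero_add]
      rw [Prod.ext_iff]
      exact ⟨by ring, by linarith [ht]⟩

lemma mem_CBL_iff {β : ℝ} (hβ : 0 < Real.sin β) {p : ℝ × ℝ} :
    p ∈ CBL β ↔ p.2 < 0 ∧ p.1 * Real.sin β < p.2 * Real.cos β := by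
  have h := mem_CTR_iff (p := -p) hβ
  simp only [CBL, mem_setOf_eq] at *
  rw [h]
  simp only [Prod.fst_neg, Prod.snd_neg]
  constructor
  · rintro ⟨h1, h2⟩; constructor <;> linarith
  · rintro ⟨h1, h2⟩; constructor <;> linarith

lemma mem_CBR_iff {β : ℝ} (hβ : 0 < Real.sin β) {p : ℝ × ℝ} :
    p ∈ CBR β ↔ p.2 < 0 ∧ p.2 * Real.cos β < p.1 * Real.sin β := by
  have h := mem_CTL_iff (p := -p) hβ
  simp only [CBR, mem_setOf_eq] at *
  rw [h]
  simp only [Prod.fst_neg, Prod.snd_neg]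
  constructor
  · rintro ⟨h1, h2⟩; constructor <;> linarith
  · rintro ⟨h1, h2⟩; constructor <;> linarith

set_option maxHeartbeats 2000000 in
theorem max_area_angle_not_prescribed (β₀ : ℝ) (hβ₀ : β₀ ∈ Set.Ioo 0 Real.pi) :
    ∃ P : Set (ℝ × ℝ), P.Finite ∧ ∃ β₁ ∈ Set.Ioo 0 Real.pi,
      MeasureTheory.volume (betaHull β₀ P) = 0 ∧
      0 < MeasureTheory.volume (betaHull β₁ P) := by
  obtain ⟨hβ0pos, hβ0lt⟩ := hβ₀
  have hpi : (0:ℝ) < Real.pi := Real.pi_pos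
  set β₁ := β₀ / 2 with hβ₁def
  have hβ₁pos : 0 < β₁ := by positivity
  have hβ₁lt2 : β₁ < Real.pi / 2 := by rw [hβ₁def]; linarith
  set s1 := Real.sin β₁ with hs1def
  set c1 := Real.cos β₁ with hc1def
  set s0 := Real.sin β₀ with hs0def
  set c0 := Real.cos β₀ with hc0def
  have hs1 : 0 < s1 := Real.sin_pos_of_pos_of_lt_pi hβ₁pos (by linarith)
  have hs0 : 0 < s0 := Real.sin_pos_of_pos_of_lt_pi hβ0pos hβ0lt
  have hc1pos : 0 < c1 := Real.cos_pos_of_mem_Ioo ⟨by linarith, hβ₁lt2⟩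
  have hc1le : c1 ≤ 1 := Real.cos_le_one β₁
  have hdouble : s0 = 2 * s1 * c1 := by
    have h := Real.sin_two_mul β₁
    rw [show 2 * β₁ = β₀ by rw [hβ₁def]; ring] at h
    rw [hs0def, h, hs1def, hc1def]
  have hsinsub : s0 * c1 - c0 * s1 = s1 := by
    have h := Real.sin_sub β₀ β₁
    rw [show β₀ - β₁ = β₁ by rw [hβ₁def]; ring] at h
    rw [hs1def, hc1def, hs0def, hc0def] at *
    linarith [h]
  have h4s1 : s0 < 4 * s1 := by nlinarith
  set P : Set (ℝ × ℝ) := {((0:ℝ),(0:ℝ)), ((1:ℝ),(0:ℝ)), (4*c1, 4*s1), (1+4*c1, 4*s1)}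
    with hPdef
  refine ⟨P, (((Set.finite_singleton _).insert _).insert _).insert _, β₁,
    ⟨hβ₁pos, by linarith⟩, ?_, ?_⟩
  · -- zero area for β₀
    have hsub : betaHull β₀ P ⊆
        (univ ×ˢ {(0:ℝ)} : Set (ℝ × ℝ)) ∪ (univ ×ˢ {4*s1} : Set (ℝ × ℝ)) := by
      intro x hx
      by_contra hxn
      simp only [mem_union, mem_prod, mem_univ, mem_singleton_iff, true_and] at hxn
      push_neg at hxn
      obtain ⟨h0, hY⟩ := hxn
      have hPy : ∀ p ∈ P, p.2 = 0 ∨ p.2 = 4*s1 := by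
        intro p hp
        simp only [hPdef, mem_insert_iff, mem_singleton_iff] at hp
        rcases hp with rfl | rfl | rfl | rfl <;> simp
      rcases lt_trichotomy x.2 0 with h | h | h
      · -- below: CBL quadrant with apex on the x-axis
        refine hx (x.1 - x.2*c0/s0 + 1, 0) (CBL β₀) (Or.inr (Or.inr (Or.inl rfl))) ?_ ?_
        · apply Set.eq_empty_iff_forall_notMem.2
          rintro p ⟨hpP, hpQ⟩
          have hq := (mem_CBL_iff hs0).1 hpQ
          simp only [Prod.snd_sub] at hq
          rcases hPy p hpP with h2 | h2 <;> simp [h2] at hq <;> nlinarith [hq.1]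
        · show x - _ ∈ CBL β₀
          rw [mem_CBL_iff hs0]
          have hd : x.2*c0/s0*s0 = x.2*c0 := div_mul_cancel₀ _ hs0.ne'
          simp only [Prod.fst_sub, Prod.snd_sub]
          constructor
          · simpa using h
          · simp only [sub_zero]
            nlinarith [hd]
      · exact h0 h
      rcases lt_trichotomy x.2 (4*s1) with h' | h' | h'
      · -- middle strip
        rcases lt_or_ge (x.1*s0 - x.2*c0) (4*s1) with hcase | hcase
        · -- left: CTL quadrant with apex (M, 0), M*s0 = 4*s1
          have hM : (4*c1 - 4*s1*c0/s0)*s0 = 4*s1 := by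
            rw [sub_mul, div_mul_cancel₀ _ hs0.ne']; nlinarith [hsinsub]
          refine hx (4*c1 - 4*s1*c0/s0, 0) (CTL β₀) (Or.inr (Or.inl rfl)) ?_ ?_
          · apply Set.eq_empty_iff_forall_notMem.2
            rintro p ⟨hpP, hpQ⟩
            have hq := (mem_CTL_iff hs0).1 hpQ
            simp only [Prod.fst_sub, Prod.snd_sub, sub_zero] at hq
            simp only [hPdef, mem_insert_iff, mem_singleton_iff] at hpP
            rcases hpP with rfl | rfl | rfl | rfl <;> simp at hq <;> nlinarith [hq.1, hq.2, hM]
          · show x - _ ∈ CTL β₀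
            rw [mem_CTL_iff hs0]
            simp only [Prod.fst_sub, Prod.snd_sub, sub_zero]
            exact ⟨h, by nlinarith [hM]⟩
        · -- right: CBR quadrant with apex (1 + 4*s1*c0/s0, 4*s1)
          have hd : 4*s1*c0/s0*s0 = 4*s1*c0 := div_mul_cancel₀ _ hs0.ne'
          refine hx (1 + 4*s1*c0/s0, 4*s1) (CBR β₀) (Or.inr (Or.inr (Or.inr rfl))) ?_ ?_
          · apply Set.eq_empty_iff_forall_notMem.2
            rintro p ⟨hpP, hpQ⟩
            have hq := (mem_CBR_iff hs0).1 hpQ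
            simp only [Prod.fst_sub, Prod.snd_sub] at hq
            simp only [hPdef, mem_insert_iff, mem_singleton_iff] at hpP
            rcases hpP with rfl | rfl | rfl | rfl <;> simp at hq <;> nlinarith [hq.1, hq.2, hd]
          · show x - _ ∈ CBR β₀
            rw [mem_CBR_iff hs0]
            simp only [Prod.fst_sub, Prod.snd_sub]
            refine ⟨by linarith, ?_⟩
            nlinarith [hd]
      · exact hY h'
      · -- above: CTR quadrant with apex on the top line
        refine hx (x.1 - (x.2 - 4*s1)*c0/s0 - 1, 4*s1) (CTR β₀) (Or.inl rfl) ?_ ?_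
        · apply Set.eq_empty_iff_forall_notMem.2
          rintro p ⟨hpP, hpQ⟩
          have hq := (mem_CTR_iff hs0).1 hpQ
          simp only [Prod.snd_sub] at hq
          rcases hPy p hpP with h2 | h2 <;> simp [h2] at hq <;> nlinarith [hq.1]
        · show x - _ ∈ CTR β₀
          rw [mem_CTR_iff hs0]
          have hd : (x.2 - 4*s1)*c0/s0*s0 = (x.2 - 4*s1)*c0 := div_mul_cancel₀ _ hs0.ne'
          simp only [Prod.fst_sub, Prod.snd_sub]
          exact ⟨by linarith, by nlinarith [hd]⟩
    refine measure_mono_null hsub ?_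
    have hline : ∀ y : ℝ, volume ((univ ×ˢ {y} : Set (ℝ × ℝ))) = 0 := by
      intro y
      rw [MeasureTheory.Measure.volume_eq_prod, MeasureTheory.Measure.prod_prod,
        Real.volume_singleton, mul_zero]
    exact measure_union_null (hline 0) (hline (4*s1))
  · -- positive area for β₁
    set T : Set (ℝ × ℝ) :=
      (Ioo (1/2 + 2*c1 - 1/8) (1/2 + 2*c1 + 1/8)) ×ˢ (Ioo (2*s1 - s1/16) (2*s1 + s1/16))
      with hTdef
    have hTsub : T ⊆ betaHull β₁ P := by
      rintro p ⟨hp1, hp2⟩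
      simp only [mem_Ioo] at hp1 hp2
      have hσ0 : 0 < p.1 * s1 - p.2 * c1 := by nlinarith
      have hσ1 : p.1 * s1 - p.2 * c1 < s1 := by nlinarith
      have hτ0 : 0 < p.2 := by nlinarith
      have hτ4 : p.2 < 4 * s1 := by nlinarith
      intro a C hC hfree hquad
      have hnot : ∀ q : ℝ × ℝ, q ∈ P → q ∈ quad a C → False := by
        intro q hqP hqQ
        have : q ∈ P ∩ quad a C := ⟨hqP, hqQ⟩
        rw [hfree] at this
        exact this
      rcases hC with rfl | rfl | rfl | rfl
      · -- CTR : corner (1+4c1, 4s1)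
        have hq := (mem_CTR_iff hs1).1 hquad
        simp only [Prod.fst_sub, Prod.snd_sub] at hq
        refine hnot (1+4*c1, 4*s1) (by simp [hPdef]) ?_
        show _ - _ ∈ CTR β₁
        rw [mem_CTR_iff hs1]
        simp only [Prod.fst_sub, Prod.snd_sub]
        exact ⟨by linarith [hq.1], by nlinarith [hq.2]⟩
      · -- CTL : corner (4c1, 4s1)
        have hq := (mem_CTL_iff hs1).1 hquad
        simp only [Prod.fst_sub, Prod.snd_sub] at hq
        refine hnot (4*c1, 4*s1) (by simp [hPdef]) ?_
        show _ - _ ∈ CTL β₁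
        rw [mem_CTL_iff hs1]
        simp only [Prod.fst_sub, Prod.snd_sub]
        exact ⟨by linarith [hq.1], by nlinarith [hq.2]⟩
      · -- CBL : corner (0,0)
        have hq := (mem_CBL_iff hs1).1 hquad
        simp only [Prod.fst_sub, Prod.snd_sub] at hq
        refine hnot (0, 0) (by simp [hPdef]) ?_
        show _ - _ ∈ CBL β₁
        rw [mem_CBL_iff hs1]
        simp only [Prod.fst_sub, Prod.snd_sub]
        exact ⟨by linarith [hq.1], by nlinarith [hq.2]⟩
      · -- CBR : corner (1,0)
        have hq := (mem_CBR_iff hs1).1 hquad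
        simp only [Prod.fst_sub, Prod.snd_sub] at hq
        refine hnot (1, 0) (by simp [hPdef]) ?_
        show _ - _ ∈ CBR β₁
        rw [mem_CBR_iff hs1]
        simp only [Prod.fst_sub, Prod.snd_sub]
        exact ⟨by linarith [hq.1], by nlinarith [hq.2]⟩
    refine lt_of_lt_of_le ?_ (measure_mono hTsub)
    rw [hTdef, MeasureTheory.Measure.volume_eq_prod, MeasureTheory.Measure.prod_prod,
      Real.volume_Ioo, Real.volume_Ioo]
    refine ENNReal.mul_pos ?_ ?_
    · exact (ENNReal.ofReal_pos.2 (by linarith)).ne'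
    · exact (ENNReal.ofReal_pos.2 (by linarith)).ne'
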